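/- arXiv:1507.00433 — 4 statements merged into one kernel-verified Lean document; each statement's English description precedes it below -/
import Mathlib

section
/- Let q(x|θ) = exp(θᵀt(x) - ψ(θ) + b(x)) be the density of an exponential family distribution on ℝ^m with sufficient statistic t: ℝ^m → ℝ^s and twice differentiable t and b. Then the Hyvärinen scoring rule S(x, Q_θ) = Δ log q(x|θ) + (1/2)‖∇ log q(x|θ)‖₂², where ∇ and Δ are the gradient and Laplacian in x, is a quadratic function of θ: specifically S(x, Q_θ) = (1/2)θᵀΓ(x)θ + g(x)ᵀθ + c(x), where Γ(x) = Σ_{j=1}^m h_j(x)h_j(x)ᵀ with h_j(x) = ∂t(x)/∂x_j, g(x) = Σ_j (∂b(x)/∂x_j)h_j(x) + Δt(x), and c(x) = (1/2)‖∇b(x)‖₂² + Δb(x). Moreover Γ(x) is positive semidefinite. -/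
/-!
Since `log q(·|θ)` is `θ ⬝ᵥ t + b` up to a term constant in `x`, its first and second partial
derivatives are affine in `θ`: `∂ⱼ log q = θ ⬝ᵥ hⱼ + ∂ⱼ b` and `∂ⱼ² log q = θ ⬝ᵥ ∂ⱼ hⱼ + ∂ⱼ² b`.
Summing the second ones and half the squares of the first ones expands into a quadratic
polynomial in `θ` whose quadratic part is `∑ⱼ (hⱼ ⬝ᵥ θ)² = θ ⬝ᵥ Γ θ`, a sum of squares, so `Γ` is
positive semidefinite.
-/

open Matrix

noncomputable def pderiv' {m : ℕ} (f : (Fin m → ℝ) → ℝ) (j : Fin m) (x : Fin m → ℝ) : ℝ :=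
  deriv (fun s => f (Function.update x j s)) (x j)

section PartialDerivative

variable {m : ℕ} {f g : (Fin m → ℝ) → ℝ} {x : Fin m → ℝ}

theorem hasDerivAt_comp_update (hf : DifferentiableAt ℝ f x) (j : Fin m) :
    HasDerivAt (fun s => f (Function.update x j s)) (fderiv ℝ f x (Pi.single j 1)) (x j) := by
  have hf' : HasFDerivAt f (fderiv ℝ f x) (Function.update x j (x j)) := by
    simpa using hf.hasFDerivAt
  exact hf'.comp_hasDerivAt (x j) (hasDerivAt_update x j (x j))

theorem pderiv'_eq_fderiv (hf : DifferentiableAt ℝ f x) (j : Fin m) :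
    pderiv' f j x = fderiv ℝ f x (Pi.single j 1) :=
  (hasDerivAt_comp_update hf j).deriv

theorem contDiff_pderiv' {n : WithTop ℕ∞} (hf : ContDiff ℝ (n + 1) f) (j : Fin m) :
    ContDiff ℝ n (pderiv' f j) := by
  have hd : Differentiable ℝ f := hf.differentiable (by simp)
  rw [show pderiv' f j = fun y => fderiv ℝ f y (Pi.single j 1) from
    funext fun y => pderiv'_eq_fderiv (hd y) j]
  exact (hf.fderiv_right le_rfl).clm_apply contDiff_const

theorem pderiv'_sub_const (c : ℝ) (j : Fin m) :
    pderiv' (fun y => f y - c) j x = pderiv' f j x :=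
  deriv_sub_const c

theorem pderiv'_dotProduct_add {ι : Type*} [Fintype ι] (θ : ι → ℝ)
    {F : (Fin m → ℝ) → ι → ℝ} (hF : ∀ a, DifferentiableAt ℝ (fun y => F y a) x)
    (hg : DifferentiableAt ℝ g x) (j : Fin m) :
    pderiv' (fun y => θ ⬝ᵥ F y + g y) j x
      = θ ⬝ᵥ (fun a => pderiv' (fun y => F y a) j x) + pderiv' g j x := by
  have hF' : ∀ a, HasDerivAt (fun s => F (Function.update x j s) a)
      (pderiv' (fun y => F y a) j x) (x j) := fun a =>
    (hasDerivAt_comp_update (hF a) j).congr_deriv (pderiv'_eq_fderiv (hF a) j).symm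
  have hg' := (hasDerivAt_comp_update hg j).congr_deriv (pderiv'_eq_fderiv hg j).symm
  exact ((HasDerivAt.fun_sum fun a _ => (hF' a).const_mul (θ a)).add hg').deriv

end PartialDerivative

section Quadratic

variable {m ι : Type*} [Fintype m] [Fintype ι]

theorem dotProduct_sum_vecMulVec_self_mulVec (h : m → ι → ℝ) (v : ι → ℝ) :
    v ⬝ᵥ (∑ j, vecMulVec (h j) (h j)) *ᵥ v = ∑ j, (h j ⬝ᵥ v) ^ 2 := by
  simp only [sum_mulVec, vecMulVec_mulVec, dotProduct_sum]
  refine Finset.sum_congr rfl fun j _ => ?_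
  simp [dotProduct_comm v, pow_two]

theorem posSemidef_sum_vecMulVec_self (h : m → ι → ℝ) :
    (∑ j, vecMulVec (h j) (h j)).PosSemidef :=
  posSemidef_sum _ fun j _ => by simpa using posSemidef_vecMulVec_self_star (h j)

theorem sum_add_half_sum_sq_eq_quadratic (θ : ι → ℝ) (p P : m → ι → ℝ) (B C : m → ℝ) :
    ∑ j, (θ ⬝ᵥ P j + C j) + (1 / 2) * ∑ j, (θ ⬝ᵥ p j + B j) ^ 2
      = (1 / 2) * (θ ⬝ᵥ (∑ j, vecMulVec (p j) (p j)) *ᵥ θ) + (∑ j, (B j • p j + P j)) ⬝ᵥ θ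
        + ((1 / 2) * ∑ j, B j ^ 2 + ∑ j, C j) := by
  simp only [dotProduct_sum_vecMulVec_self_mulVec, sum_dotProduct, add_dotProduct,
    smul_dotProduct, smul_eq_mul, Finset.mul_sum, ← Finset.sum_add_distrib]
  refine Finset.sum_congr rfl fun j _ => ?_
  rw [dotProduct_comm (p j), dotProduct_comm (P j)]
  ring

end Quadratic

/-- The Hyvärinen scoring rule of an exponential family density is quadratic in the
natural parameter, with positive semidefinite quadratic part. -/
theorem stmt_0 {m s : ℕ}
    (t : (Fin m → ℝ) → Fin s → ℝ) (b : (Fin m → ℝ) → ℝ) (ψ : (Fin s → ℝ) → ℝ)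
    (ht : ∀ a, ContDiff ℝ 2 (fun y => t y a)) (hb : ContDiff ℝ 2 b)
    (logq : (Fin s → ℝ) → (Fin m → ℝ) → ℝ)
    (hlogq : ∀ θ y, logq θ y = (∑ a, θ a * t y a) - ψ θ + b y)
    (x : Fin m → ℝ) (θ : Fin s → ℝ)
    (h : Fin m → Fin s → ℝ)
    (hh : ∀ j a, h j a = pderiv' (fun y => t y a) j x)
    (Γ : Matrix (Fin s) (Fin s) ℝ)
    (hΓ : Γ = ∑ j, Matrix.vecMulVec (h j) (h j))
    (g : Fin s → ℝ)
    (hg : ∀ a, g a = (∑ j, pderiv' b j x * h j a)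
        + ∑ j, pderiv' (fun y => pderiv' (fun z => t z a) j y) j x)
    (c : ℝ)
    (hc : c = (1/2) * (∑ j, (pderiv' b j x)^2)
        + ∑ j, pderiv' (fun y => pderiv' b j y) j x) :
    ((∑ j, pderiv' (fun y => pderiv' (logq θ) j y) j x)
        + (1/2) * ∑ j, (pderiv' (logq θ) j x)^2
      = (1/2) * (θ ⬝ᵥ Γ.mulVec θ) + g ⬝ᵥ θ + c)
    ∧ Γ.PosSemidef := by
  have hlogq' : logq θ = fun y => θ ⬝ᵥ t y + (b y - ψ θ) :=
    funext fun y => by rw [hlogq, dotProduct]; ring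
  have dlogq : ∀ j, pderiv' (logq θ) j
      = fun y => θ ⬝ᵥ (fun a => pderiv' (fun z => t z a) j y) + pderiv' b j y := by
    intro j; funext y
    rw [hlogq', pderiv'_dotProduct_add θ (fun a => ((ht a).differentiable (by simp)) y)
      (((hb.differentiable (by simp)) y).sub_const _), pderiv'_sub_const]
  have d2logq : ∀ j, pderiv' (pderiv' (logq θ) j) j x
      = θ ⬝ᵥ (fun a => pderiv' (pderiv' (fun z => t z a) j) j x) + pderiv' (pderiv' b j) j x := by
    intro j
    rw [dlogq, pderiv'_dotProduct_add θ
      (fun a => ((contDiff_pderiv' (n := 1) (ht a) j).differentiable one_ne_zero) x)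
      (((contDiff_pderiv' (n := 1) hb j).differentiable one_ne_zero) x)]
  have hh_fun : ∀ j, h j = fun a => pderiv' (fun z => t z a) j x := fun j => funext (hh j)
  have hg_sum : g = ∑ j, (pderiv' b j x • h j
      + fun a => pderiv' (pderiv' (fun z => t z a) j) j x) := by
    ext a
    simp only [hg, Finset.sum_apply, Pi.add_apply, Pi.smul_apply, smul_eq_mul,
      Finset.sum_add_distrib]
  refine ⟨?_, hΓ ▸ posSemidef_sum_vecMulVec_self h⟩
  rw [hΓ, hg_sum, hc, ← sum_add_half_sum_sq_eq_quadratic]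
  simp only [d2logq, congrFun (dlogq _) x, hh_fun]
end

section
/- Let q(x|θ) be as in the exponential family setup with support the positive orthant ℝ₊^m. The non-negative Hyvärinen scoring rule S₊(x, Q_θ) = Σ_{j=1}^m [2x_j ∂_j log q(x) + x_j² ∂²_{jj} log q(x) + (1/2)x_j² (∂_j log q(x))²] is a quadratic function of θ of the form (1/2)θᵀΓ₊(x)θ + g₊(x)ᵀθ + c₊(x), where Γ₊(x) = Σ_{j=1}^m x_j² h_j(x)h_j(x)ᵀ with h_j(x) = ∂t(x)/∂x_j; in particular Γ₊(x) is positive semidefinite. -/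
/-! Since `log q(x|θ)` is affine in `θ`, so are its first and second partial derivatives in `x`,
`∂_j log q = θᵀ h_j + ∂_j b` and `∂²_jj log q = θᵀ ∂_j h_j + ∂²_jj b`. The scoring rule is a polynomial
of degree two in these, hence quadratic in `θ`, and its only degree-two term is
`½ ∑ j, x_j² (θᵀ h_j)² = ½ θᵀ Γ₊ θ`, a sum of squares. -/

open Matrix

open Function Filter Topology

section QuadraticForm

variable {ι n R : Type*} [Fintype ι] [Fintype n]

lemma dotProduct_vecMulVec_self_mulVec [CommRing R] (u θ : n → R) :
    θ ⬝ᵥ (vecMulVec u u *ᵥ θ) = (u ⬝ᵥ θ) ^ 2 := by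
  rw [vecMulVec_mulVec, op_smul_eq_smul, dotProduct_smul, smul_eq_mul, dotProduct_comm, sq]

lemma posSemidef_sum_sq_smul_vecMulVec (w : ι → ℝ) (u : ι → n → ℝ) :
    (∑ j, w j ^ 2 • vecMulVec (u j) (u j)).PosSemidef :=
  posSemidef_sum _ fun j _ => by
    simpa using (posSemidef_vecMulVec_self_star (u j)).smul (sq_nonneg (w j))

lemma exists_hyvarinen_sum_eq_quadratic (w : ι → ℝ) (u v : ι → n → ℝ) (p q : ι → ℝ) :
    ∃ (g : n → ℝ) (c : ℝ), ∀ θ : n → ℝ,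
      ∑ j, (2 * w j * (θ ⬝ᵥ u j + p j) + w j ^ 2 * (θ ⬝ᵥ v j + q j)
          + 1 / 2 * w j ^ 2 * (θ ⬝ᵥ u j + p j) ^ 2)
        = 1 / 2 * (θ ⬝ᵥ (∑ j, w j ^ 2 • vecMulVec (u j) (u j)) *ᵥ θ) + g ⬝ᵥ θ + c := by
  refine ⟨∑ j, ((2 * w j + w j ^ 2 * p j) • u j + w j ^ 2 • v j),
    ∑ j, (2 * w j * p j + w j ^ 2 * q j + 1 / 2 * w j ^ 2 * p j ^ 2), fun θ => ?_⟩
  simp only [sum_mulVec, dotProduct_sum, sum_dotProduct, smul_mulVec, dotProduct_smul,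
    add_dotProduct, smul_dotProduct, dotProduct_vecMulVec_self_mulVec, smul_eq_mul,
    Finset.mul_sum, ← Finset.sum_add_distrib]
  refine Finset.sum_congr rfl fun j _ => ?_
  rw [dotProduct_comm θ (u j), dotProduct_comm θ (v j)]
  ring

end QuadraticForm

section LineDerivatives

lemma isOpen_setOf_forall_pos {ι : Type*} [Finite ι] : IsOpen {y : ι → ℝ | ∀ j, 0 < y j} := by
  simp only [Set.ofPred_forall]
  exact isOpen_iInter_of_finite fun j => isOpen_lt continuous_const (continuous_apply j)

lemma ContDiffOn.contDiffAt_update {ι F : Type*} [Fintype ι] [DecidableEq ι]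
    [NormedAddCommGroup F] [NormedSpace ℝ F] {n : WithTop ℕ∞} {f : (ι → ℝ) → F}
    {U : Set (ι → ℝ)} {x : ι → ℝ} (hf : ContDiffOn ℝ n f U) (hU : U ∈ 𝓝 x) (j : ι) :
    ContDiffAt ℝ n (fun r => f (update x j r)) (x j) :=
  (hf.contDiffAt (by rwa [update_eq_self])).comp (x j) (contDiff_update n x j).contDiffAt

variable {ι : Type*} [Fintype ι]

lemma deriv_sum_mul_sub_add {φ : ι → ℝ → ℝ} {β : ℝ → ℝ} {z : ℝ} (θ : ι → ℝ) (c : ℝ)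
    (hφ : ∀ a, DifferentiableAt ℝ (φ a) z) (hβ : DifferentiableAt ℝ β z) :
    deriv (fun r => (∑ a, θ a * φ a r) - c + β r) z = (∑ a, θ a * deriv (φ a) z) + deriv β z :=
  (((HasDerivAt.fun_sum fun a _ => (hφ a).hasDerivAt.const_mul (θ a)).sub_const c).add
    hβ.hasDerivAt).deriv

lemma deriv_deriv_sum_mul_sub_add {φ : ι → ℝ → ℝ} {β : ℝ → ℝ} {z : ℝ} (θ : ι → ℝ) (c : ℝ)
    (hφ : ∀ a, ContDiffAt ℝ 2 (φ a) z) (hβ : ContDiffAt ℝ 2 β z) :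
    deriv (deriv fun r => (∑ a, θ a * φ a r) - c + β r) z
      = (∑ a, θ a * deriv (deriv (φ a)) z) + deriv (deriv β) z := by
  have hφ_near : ∀ᶠ r in 𝓝 z, ∀ a, DifferentiableAt ℝ (φ a) r :=
    eventually_all.2 fun a =>
      ((hφ a).eventually (by simp)).mono fun r hr => hr.differentiableAt two_ne_zero
  have hβ_near : ∀ᶠ r in 𝓝 z, DifferentiableAt ℝ β r :=
    (hβ.eventually (by simp)).mono fun r hr => hr.differentiableAt two_ne_zero
  have hderiv : (deriv fun r => (∑ a, θ a * φ a r) - c + β r)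
      =ᶠ[𝓝 z] fun r => (∑ a, θ a * deriv (φ a) r) - 0 + deriv β r := by
    filter_upwards [hφ_near, hβ_near] with r hφr hβr
    rw [sub_zero]
    exact deriv_sum_mul_sub_add θ c hφr hβr
  rw [hderiv.deriv_eq]
  exact deriv_sum_mul_sub_add θ 0
    (fun a => ((hφ a).derivWithin (m := 1) le_rfl).differentiableAt one_ne_zero)
    ((hβ.derivWithin (m := 1) le_rfl).differentiableAt one_ne_zero)

variable {m : ℕ}

lemma pderiv'_update_self (f : (Fin m → ℝ) → ℝ) (j : Fin m) (x : Fin m → ℝ) (r : ℝ) :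
    pderiv' f j (update x j r) = deriv (fun s => f (update x j s)) r := by
  simp [pderiv', update_idem]

lemma pderiv'_pderiv' (f : (Fin m → ℝ) → ℝ) (j : Fin m) (x : Fin m → ℝ) :
    pderiv' (fun y => pderiv' f j y) j x = deriv (deriv fun s => f (update x j s)) (x j) := by
  change deriv (fun s => pderiv' f j (update x j s)) (x j) = _
  simp only [pderiv'_update_self]

variable (f : ι → (Fin m → ℝ) → ℝ) (b : (Fin m → ℝ) → ℝ) (θ : ι → ℝ) (c : ℝ) {j : Fin m}
  {x : Fin m → ℝ}

lemma pderiv'_sum_mul_sub_add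
    (hf : ∀ a, DifferentiableAt ℝ (fun r => f a (update x j r)) (x j))
    (hb : DifferentiableAt ℝ (fun r => b (update x j r)) (x j)) :
    pderiv' (fun y => (∑ a, θ a * f a y) - c + b y) j x
      = (∑ a, θ a * pderiv' (f a) j x) + pderiv' b j x :=
  deriv_sum_mul_sub_add θ c hf hb

lemma pderiv'_pderiv'_sum_mul_sub_add
    (hf : ∀ a, ContDiffAt ℝ 2 (fun r => f a (update x j r)) (x j))
    (hb : ContDiffAt ℝ 2 (fun r => b (update x j r)) (x j)) :
    pderiv' (fun y => pderiv' (fun y => (∑ a, θ a * f a y) - c + b y) j y) j x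
      = (∑ a, θ a * pderiv' (fun y => pderiv' (f a) j y) j x)
        + pderiv' (fun y => pderiv' b j y) j x := by
  simp only [pderiv'_pderiv']
  exact deriv_deriv_sum_mul_sub_add θ c hf hb

end LineDerivatives

/-- The non-negative Hyvärinen scoring rule of an exponential family on the positive
orthant is quadratic in the natural parameter, with quadratic part
`Γ₊(x) = ∑ j, x_j² h_j(x) h_j(x)ᵀ`, which is positive semidefinite. -/
theorem stmt_1 {m s : ℕ}
    (t : (Fin m → ℝ) → Fin s → ℝ) (b : (Fin m → ℝ) → ℝ) (ψ : (Fin s → ℝ) → ℝ)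
    (ht : ∀ a, ContDiffOn ℝ 2 (fun y => t y a) {y : Fin m → ℝ | ∀ j, 0 < y j})
    (hb : ContDiffOn ℝ 2 b {y : Fin m → ℝ | ∀ j, 0 < y j})
    (logq : (Fin s → ℝ) → (Fin m → ℝ) → ℝ)
    (hlogq : ∀ θ y, logq θ y = (∑ a, θ a * t y a) - ψ θ + b y)
    (x : Fin m → ℝ) (hx : ∀ j, 0 < x j)
    (h : Fin m → Fin s → ℝ)
    (hh : ∀ j a, h j a = pderiv' (fun y => t y a) j x)
    (Γ : Matrix (Fin s) (Fin s) ℝ)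
    (hΓ : Γ = ∑ j, (x j)^2 • Matrix.vecMulVec (h j) (h j)) :
    (∃ (g : Fin s → ℝ) (c : ℝ), ∀ θ : Fin s → ℝ,
      (∑ j, (2 * x j * pderiv' (logq θ) j x
          + (x j)^2 * pderiv' (fun y => pderiv' (logq θ) j y) j x
          + (1/2) * (x j)^2 * (pderiv' (logq θ) j x)^2))
        = (1/2) * (θ ⬝ᵥ Γ.mulVec θ) + g ⬝ᵥ θ + c)
    ∧ Γ.PosSemidef := by
  obtain rfl : logq = fun θ y => (∑ a, θ a * t y a) - ψ θ + b y := funext₂ hlogq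
  obtain rfl : h = fun j a => pderiv' (fun y => t y a) j x := funext₂ hh
  subst hΓ
  have hU : {y : Fin m → ℝ | ∀ j, 0 < y j} ∈ 𝓝 x := isOpen_setOf_forall_pos.mem_nhds hx
  have ht_line j a := (ht a).contDiffAt_update hU j
  have hb_line j := hb.contDiffAt_update hU j
  refine ⟨?_, posSemidef_sum_sq_smul_vecMulVec _ _⟩
  obtain ⟨g, c, hquad⟩ := exists_hyvarinen_sum_eq_quadratic x _
    (fun j a => pderiv' (fun y => pderiv' (fun y => t y a) j y) j x)
    (fun j => pderiv' b j x) (fun j => pderiv' (fun y => pderiv' b j y) j x)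
  refine ⟨g, c, fun θ => ?_⟩
  rw [← hquad θ]
  refine Finset.sum_congr rfl fun j _ => ?_
  rw [pderiv'_sum_mul_sub_add (fun a y => t y a) b θ (ψ θ)
      (fun a => (ht_line j a).differentiableAt two_ne_zero)
      ((hb_line j).differentiableAt two_ne_zero),
    pderiv'_pderiv'_sum_mul_sub_add (fun a y => t y a) b θ (ψ θ) (ht_line j) (hb_line j)]
  rfl
end

section
/- For the penalized quadratic objective Ĵ^λ(θ) = (1/2)θᵀΓθ - gᵀθ + λ‖θ‖₁ with Γ positive semidefinite and λ > 0: if (θ̃, z̃) satisfies the stationarity condition Γθ̃ - g + λz̃ = 0 where z̃ᵢ = sign(θ̃ᵢ) whenever θ̃ᵢ ≠ 0 and |z̃ᵢ| < 1 (strictly) whenever θ̃ᵢ = 0, then every minimizer θ of Ĵ^λ satisfies θᵢ = 0 for all i with θ̃ᵢ = 0; if moreover the submatrix Γ_{TT} indexed by T = {i : θ̃ᵢ ≠ 0} is invertible, then θ̃ is the unique minimizer of Ĵ^λ. -/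
open Matrix
open scoped Classical

/-!
Stationarity lets one rewrite the objective around `θ̃` as
`Ĵ(θ) = Ĵ(θ̃) + ½ (θ - θ̃)ᵀ Γ (θ - θ̃) + λ ∑ᵢ (|θᵢ| - z̃ᵢ θᵢ)`,
where both extra terms are nonnegative since `Γ ⪰ 0` and `|z̃ᵢ| ≤ 1`. Hence `θ̃` is a minimizer, and any
other minimizer `θ` makes both terms vanish: `|θᵢ| = z̃ᵢ θᵢ` with `|z̃ᵢ| < 1` forces `θᵢ = 0` off the
support `T`, and `Γ (θ - θ̃) = 0` with `θ - θ̃` supported on `T` gives `Γ_TT (θ - θ̃)_T = 0`,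
so `θ = θ̃` once `Γ_TT` is invertible.
-/

variable {ι : Type*} [Fintype ι]

namespace Matrix

variable {R : Type*} [CommRing R]

theorem IsSymm.dotProduct_mulVec_comm {A : Matrix ι ι R} (hA : A.IsSymm) (x y : ι → R) :
    x ⬝ᵥ A *ᵥ y = y ⬝ᵥ A *ᵥ x := by
  rw [dotProduct_mulVec, ← mulVec_transpose, hA.eq, dotProduct_comm]

theorem eq_zero_of_mulVec_eq_zero_of_isUnit_det_submatrix [IsDomain R] [DecidableEq ι]
    {A : Matrix ι ι R} {T : Finset ι} (hA : IsUnit (A.submatrix ((↑) : T → ι) (↑)).det)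
    {v : ι → R} (hv : ∀ i ∉ T, v i = 0) (h : A *ᵥ v = 0) : v = 0 := by
  have hsub : A.submatrix ((↑) : T → ι) (↑) *ᵥ (fun j : T => v j) = 0 := by
    funext i
    calc ∑ j : T, A i j * v j = ∑ j ∈ T, A i j * v j := Finset.sum_coe_sort T fun j => A i j * v j
      _ = (A *ᵥ v) i :=
        Finset.sum_subset (Finset.subset_univ T) fun j _ hj => by rw [hv j hj, mul_zero]
      _ = 0 := congrFun h i
  have hvT := eq_zero_of_mulVec_eq_zero hA.ne_zero hsub
  funext i
  by_cases hi : i ∈ T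
  · exact congrFun hvT ⟨i, hi⟩
  · exact hv i hi

theorem PosSemidef.dotProduct_mulVec_self_nonneg {A : Matrix ι ι ℝ} (hA : A.PosSemidef)
    (v : ι → ℝ) : 0 ≤ v ⬝ᵥ A *ᵥ v := by
  simpa using hA.dotProduct_mulVec_nonneg v

end Matrix

theorem Real.sign_mul_self (x : ℝ) : Real.sign x * x = |x| := by
  rcases lt_trichotomy x 0 with hx | rfl | hx
  · rw [Real.sign_of_neg hx, abs_of_neg hx]; ring
  · simp
  · rw [Real.sign_of_pos hx, abs_of_pos hx]; ring

theorem Real.abs_sign_le_one (x : ℝ) : |Real.sign x| ≤ 1 := by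
  rcases Real.sign_apply_eq x with h | h | h <;> simp [h]

theorem mul_le_abs_of_abs_le_one {z x : ℝ} (hz : |z| ≤ 1) : z * x ≤ |x| :=
  calc z * x ≤ |z * x| := le_abs_self _
    _ = |z| * |x| := abs_mul z x
    _ ≤ |x| := mul_le_of_le_one_left (abs_nonneg x) hz

theorem eq_zero_of_abs_eq_mul_of_abs_lt_one {z x : ℝ} (hz : |z| < 1) (h : |x| = z * x) :
    x = 0 := by
  by_contra hx
  have : z * x < |x| :=
    calc z * x ≤ |z| * |x| := (le_abs_self _).trans (abs_mul z x).le
      _ < |x| := mul_lt_of_lt_one_left (abs_pos.mpr hx) hz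
  exact this.ne h.symm

noncomputable def lassoObjective (Γ : Matrix ι ι ℝ) (g : ι → ℝ) (lam : ℝ) (θ : ι → ℝ) : ℝ :=
  (1/2) * (θ ⬝ᵥ Γ *ᵥ θ) - g ⬝ᵥ θ + lam * ∑ i, |θ i|

section Lasso

variable {Γ : Matrix ι ι ℝ} {g z θt : ι → ℝ} {lam : ℝ}

theorem sum_abs_sub_mul_nonneg (hz : ∀ i, |z i| ≤ 1) (θ : ι → ℝ) :
    0 ≤ ∑ i, (|θ i| - z i * θ i) :=
  Finset.sum_nonneg fun i _ => sub_nonneg.mpr (mul_le_abs_of_abs_le_one (hz i))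

theorem lassoObjective_eq_of_stationary (hΓ : Γ.IsSymm) (hstat : Γ *ᵥ θt - g + lam • z = 0)
    (hz : ∀ i, z i * θt i = |θt i|) (θ : ι → ℝ) :
    lassoObjective Γ g lam θ = lassoObjective Γ g lam θt
      + (1/2) * ((θ - θt) ⬝ᵥ Γ *ᵥ (θ - θt)) + lam * ∑ i, (|θ i| - z i * θ i) := by
  have hg : g = Γ *ᵥ θt + lam • z := by linear_combination (norm := module) -hstat
  have hzθt : ∑ i, |θt i| = z ⬝ᵥ θt := (Finset.sum_congr rfl fun i _ => hz i).symm
  have hzθ : ∑ i, (|θ i| - z i * θ i) = ∑ i, |θ i| - z ⬝ᵥ θ := Finset.sum_sub_distrib ..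
  simp only [lassoObjective, hg, hzθt, hzθ, mulVec_sub, dotProduct_sub, sub_dotProduct,
    add_dotProduct, smul_dotProduct, hΓ.dotProduct_mulVec_comm θt θ, dotProduct_comm (Γ *ᵥ θt),
    smul_eq_mul]
  ring

theorem lassoObjective_le_of_stationary (hΓ : Γ.PosSemidef) (hlam : 0 ≤ lam)
    (hstat : Γ *ᵥ θt - g + lam • z = 0) (hz : ∀ i, z i * θt i = |θt i|) (hz1 : ∀ i, |z i| ≤ 1)
    (θ : ι → ℝ) : lassoObjective Γ g lam θt ≤ lassoObjective Γ g lam θ := by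
  rw [lassoObjective_eq_of_stationary (isHermitian_iff_isSymm.mp hΓ.isHermitian) hstat hz θ]
  have := hΓ.dotProduct_mulVec_self_nonneg (θ - θt)
  have := mul_nonneg hlam (sum_abs_sub_mul_nonneg hz1 θ)
  linarith

theorem mulVec_sub_eq_zero_and_abs_eq_mul_of_lassoObjective_le (hΓ : Γ.PosSemidef)
    (hlam : 0 < lam) (hstat : Γ *ᵥ θt - g + lam • z = 0) (hz : ∀ i, z i * θt i = |θt i|)
    (hz1 : ∀ i, |z i| ≤ 1) (θ : ι → ℝ)
    (hθ : lassoObjective Γ g lam θ ≤ lassoObjective Γ g lam θt) :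
    Γ *ᵥ (θ - θt) = 0 ∧ ∀ i, |θ i| = z i * θ i := by
  have hexp :=
    lassoObjective_eq_of_stationary (isHermitian_iff_isSymm.mp hΓ.isHermitian) hstat hz θ
  have hquad := hΓ.dotProduct_mulVec_self_nonneg (θ - θt)
  have hgap := sum_abs_sub_mul_nonneg hz1 θ
  have hgap0 : ∑ i, (|θ i| - z i * θ i) = 0 := by nlinarith
  constructor
  · rw [← hΓ.dotProduct_mulVec_zero_iff, star_trivial]
    nlinarith
  · intro i
    exact sub_eq_zero.mp ((Finset.sum_eq_zero_iff_of_nonneg fun i _ =>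
      sub_nonneg.mpr (mul_le_abs_of_abs_le_one (hz1 i))).mp hgap0 i (Finset.mem_univ i))

end Lasso

/-- Primal-dual witness uniqueness lemma: if `(θ̃, z̃)` satisfies stationarity with
strict dual feasibility off the support of `θ̃`, then every minimizer vanishes off
that support; if moreover `Γ_TT` is invertible, `θ̃` is the unique minimizer. -/
theorem stmt_17 {s : ℕ}
    (Γ : Matrix (Fin s) (Fin s) ℝ) (hΓ : Γ.PosSemidef)
    (g : Fin s → ℝ) (lam : ℝ) (hlam : 0 < lam)
    (J : (Fin s → ℝ) → ℝ)
    (hJ : ∀ θ, J θ = (1/2) * (θ ⬝ᵥ Γ.mulVec θ) - g ⬝ᵥ θ + lam * ∑ i, |θ i|)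
    (θt zt : Fin s → ℝ)
    (hstat : Γ.mulVec θt - g + lam • zt = 0)
    (hsign : ∀ i, θt i ≠ 0 → zt i = Real.sign (θt i))
    (hstrict : ∀ i, θt i = 0 → |zt i| < 1)
    (T : Finset (Fin s)) (hT : T = Finset.univ.filter (fun i => θt i ≠ 0))
    (ΓTT : Matrix {i // i ∈ T} {i // i ∈ T} ℝ)
    (hΓTT : ∀ i j, ΓTT i j = Γ i.1 j.1) :
    (∀ θ : Fin s → ℝ, (∀ θ', J θ ≤ J θ') → ∀ i, θt i = 0 → θ i = 0) ∧
    (IsUnit ΓTT.det →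
      (∀ θ', J θt ≤ J θ') ∧
      ∀ θ : Fin s → ℝ, (∀ θ', J θ ≤ J θ') → θ = θt) := by
  obtain rfl : J = lassoObjective Γ g lam := funext hJ
  have hz : ∀ i, zt i * θt i = |θt i| := fun i => by
    by_cases h : θt i = 0
    · simp [h]
    · rw [hsign i h, Real.sign_mul_self]
  have hz1 : ∀ i, |zt i| ≤ 1 := fun i => by
    by_cases h : θt i = 0
    · exact (hstrict i h).le
    · rw [hsign i h]; exact Real.abs_sign_le_one _
  have hmin := mulVec_sub_eq_zero_and_abs_eq_mul_of_lassoObjective_le hΓ hlam hstat hz hz1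
  have hsupp : ∀ θ, (∀ θ', lassoObjective Γ g lam θ ≤ lassoObjective Γ g lam θ') →
      ∀ i, θt i = 0 → θ i = 0 := fun θ hθ i hi =>
    eq_zero_of_abs_eq_mul_of_abs_lt_one (hstrict i hi) ((hmin θ (hθ θt)).2 i)
  refine ⟨hsupp, fun hdet => ⟨lassoObjective_le_of_stationary hΓ hlam.le hstat hz hz1,
    fun θ hθ => sub_eq_zero.mp ?_⟩⟩
  obtain rfl : ΓTT = Γ.submatrix (↑) (↑) := Matrix.ext hΓTT
  refine eq_zero_of_mulVec_eq_zero_of_isUnit_det_submatrix hdet (fun i hi => ?_) (hmin θ (hθ θt)).1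
  have hθti : θt i = 0 := by simpa [hT] using hi
  simp [hθti, hsupp θ hθ i hθti]
end

section
/- Let ρ ∈ (0, 1/√2) and let Σ be the 4×4 matrix with ones on the diagonal, Σ₂₃ = Σ₃₂ = 0, Σ₁₄ = Σ₄₁ = 2ρ², and all other off-diagonal entries equal to ρ. Then Σ is positive definite and its inverse K = Σ^{-1} satisfies K₁₄ = K₄₁ = 0. -/
/-!
The inverse is explicit: `Σ P = (1 - 2ρ²) • 1` for a matrix `P` whose corner entries vanish.
For definiteness, completing squares gives
`xᵀ Σ x = (ρ(x₀ + x₃) + x₁)² + (ρ(x₀ + x₃) + x₂)² + (1 - 2ρ²)(x₀² + x₃²)`,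
a sum of nonnegative terms that vanishes only at `x = 0` once `2ρ² < 1`.
-/

open Matrix

namespace Meinshausen

variable {R : Type*}

def cov [CommRing R] (ρ : R) : Matrix (Fin 4) (Fin 4) R :=
  !![1, ρ, ρ, 2 * ρ ^ 2;
     ρ, 1, 0, ρ;
     ρ, 0, 1, ρ;
     2 * ρ ^ 2, ρ, ρ, 1]

def scaledPrecision [CommRing R] (ρ : R) : Matrix (Fin 4) (Fin 4) R :=
  !![1, -ρ, -ρ, 0;
     -ρ, 1, 2 * ρ ^ 2, -ρ;
     -ρ, 2 * ρ ^ 2, 1, -ρ;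
     0, -ρ, -ρ, 1]

theorem cov_mul_scaledPrecision [CommRing R] (ρ : R) :
    cov ρ * scaledPrecision ρ = (1 - 2 * ρ ^ 2) • 1 := by
  ext i j
  fin_cases i <;> fin_cases j <;>
    simp [cov, scaledPrecision, mul_apply, Fin.sum_univ_four] <;> ring

theorem inv_cov [Field R] {ρ : R} (hρ : 1 - 2 * ρ ^ 2 ≠ 0) :
    (cov ρ)⁻¹ = (1 - 2 * ρ ^ 2)⁻¹ • scaledPrecision ρ := by
  refine inv_eq_right_inv ?_
  rw [mul_smul_comm, cov_mul_scaledPrecision, smul_smul, inv_mul_cancel₀ hρ, one_smul]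

theorem dotProduct_cov_mulVec [CommRing R] (ρ : R) (x : Fin 4 → R) :
    x ⬝ᵥ (cov ρ *ᵥ x) = (ρ * (x 0 + x 3) + x 1) ^ 2 + (ρ * (x 0 + x 3) + x 2) ^ 2
      + (1 - 2 * ρ ^ 2) * (x 0 ^ 2 + x 3 ^ 2) := by
  simp only [dotProduct, mulVec, cov, of_apply, cons_val', cons_val_fin_one, Fin.sum_univ_four,
    cons_val_zero, cons_val_one, cons_val, one_mul, zero_mul, add_zero]
  ring

theorem posDef_cov {ρ : ℝ} (hρ : 2 * ρ ^ 2 < 1) : (cov ρ).PosDef := by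
  refine .of_dotProduct_mulVec_pos ?_ fun x hx => ?_
  · ext i j
    fin_cases i <;> fin_cases j <;> simp [cov]
  rw [star_trivial, dotProduct_cov_mulVec]
  by_contra! hle
  have hc : 0 < 1 - 2 * ρ ^ 2 := by linarith
  have h03 : x 0 ^ 2 + x 3 ^ 2 ≤ 0 := by
    nlinarith [sq_nonneg (ρ * (x 0 + x 3) + x 1), sq_nonneg (ρ * (x 0 + x 3) + x 2)]
  have h0 : x 0 = 0 := by nlinarith [sq_nonneg (x 3)]
  have h3 : x 3 = 0 := by nlinarith [sq_nonneg (x 0)]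
  rw [h0, h3] at hle
  have h1 : x 1 = 0 := by nlinarith [sq_nonneg (x 2)]
  have h2 : x 2 = 0 := by nlinarith [sq_nonneg (x 1)]
  exact hx (by ext i; fin_cases i <;> assumption)

end Meinshausen

theorem two_mul_sq_lt_one_of_lt_one_div_sqrt_two {ρ : ℝ} (h₀ : 0 ≤ ρ) (h : ρ < 1 / √2) :
    2 * ρ ^ 2 < 1 := by
  rw [one_div, ← Real.sqrt_inv, Real.lt_sqrt h₀] at h
  linarith

/-- Meinshausen's example: the 4×4 covariance matrix with the given pattern is
positive definite and its inverse has a zero `(1,4)` entry. -/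
theorem stmt_18 (ρ : ℝ) (hρ : ρ ∈ Set.Ioo (0 : ℝ) (1 / Real.sqrt 2))
    (Sig : Matrix (Fin 4) (Fin 4) ℝ)
    (hSig : Sig = !![1, ρ, ρ, 2*ρ^2;
                 ρ, 1, 0, ρ;
                 ρ, 0, 1, ρ;
                 2*ρ^2, ρ, ρ, 1]) :
    Sig.PosDef ∧ Sig⁻¹ 0 3 = 0 ∧ Sig⁻¹ 3 0 = 0 := by
  obtain rfl : Sig = Meinshausen.cov ρ := hSig
  have hρ' := two_mul_sq_lt_one_of_lt_one_div_sqrt_two hρ.1.le hρ.2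
  rw [Meinshausen.inv_cov (by linarith)]
  exact ⟨Meinshausen.posDef_cov hρ', by simp [Meinshausen.scaledPrecision],
    by simp [Meinshausen.scaledPrecision]⟩
end
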